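/- arXiv:1211.5383 — 5 statements merged into one kernel-verified Lean document; each statement's English description precedes it below -/
import Mathlib

section
/- Let D be a division ring with at least 4 elements. Then D is twin-good, i.e., for each x ∈ D there exists a unit u ∈ D such that both x + u and x − u are units in D. -/
/-!
A nonzero `u` fails to witness twin-goodness of `x` only if `x + u = 0` or `x - u = 0`, i.e.
`u ∈ {-x, x}`. So every `u ∉ {0, -x, x}` is a witness, and such a `u` exists once `D` has at
least four elements.
-/

theorem Cardinal.exists_ne_ne_ne_of_four_le_mk {α : Type*} (h : 4 ≤ Cardinal.mk α) (a b c : α) :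
    ∃ u : α, u ≠ a ∧ u ≠ b ∧ u ≠ c := by
  classical
  by_contra! hcover
  have hsub : (Set.univ : Set α) ⊆ ↑({a, b, c} : Finset α) := fun u _ => by
    by_cases ha : u = a
    · simp [ha]
    by_cases hb : u = b
    · simp [hb]
    simp [hcover u ha hb]
  have hle : Cardinal.mk α ≤ 3 :=
    calc Cardinal.mk α = Cardinal.mk (Set.univ : Set α) := Cardinal.mk_univ.symm
      _ ≤ Cardinal.mk ↑({a, b, c} : Finset α) := Cardinal.mk_le_mk_of_subset hsub
      _ = (({a, b, c} : Finset α).card : Cardinal) := Cardinal.mk_coe_finset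
      _ ≤ 3 := by exact_mod_cast Finset.card_le_three
  have : (4 : Cardinal) ≤ 3 := h.trans hle
  norm_num at this

theorem DivisionRing.isUnit_add_and_isUnit_sub {D : Type*} [DivisionRing D] {x u : D}
    (hneg : u ≠ -x) (hx : u ≠ x) : IsUnit (x + u) ∧ IsUnit (x - u) :=
  ⟨isUnit_iff_ne_zero.mpr fun h => hneg (eq_neg_of_add_eq_zero_right h),
    isUnit_iff_ne_zero.mpr fun h => hx (sub_eq_zero.mp h).symm⟩

/-- A division ring `D` with at least 4 elements is twin-good: for each `x ∈ D`
there is a unit `u` such that both `x + u` and `x - u` are units. -/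
theorem divisionRing_twinGood (D : Type*) [DivisionRing D] (hD : 4 ≤ Cardinal.mk D) :
    ∀ x : D, ∃ u : D, IsUnit u ∧ IsUnit (x + u) ∧ IsUnit (x - u) := by
  intro x
  obtain ⟨u, hu0, hneg, hx⟩ := Cardinal.exists_ne_ne_ne_of_four_le_mk hD 0 (-x) x
  exact ⟨u, isUnit_iff_ne_zero.mpr hu0, DivisionRing.isUnit_add_and_isUnit_sub hneg hx⟩
end

section
/- Let R be a ring and I a two-sided ideal of R contained in the Jacobson radical J(R). If the factor ring R/I is twin-good, then R is twin-good. -/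
/-!
Units lift along `R → R/I` when `I ⊆ J(R)`: if `a` is invertible modulo `I`, with inverse `b`,
then `a * b` and `b * a` lie in `1 + J(R)` and are therefore units, so `a` has both a left and a
right inverse. Lifting a twin-good witness `u` for `x mod I` to any `v ∈ R` thus makes `v`,
`x + v` and `x - v` units of `R`.
-/

namespace TwoSidedIdeal

variable {R : Type*} [Ring R]

theorem isUnit_one_add_of_mem_jacobson_bot {x : R} (hx : x ∈ jacobson (⊥ : TwoSidedIdeal R)) :
    IsUnit (1 + x) := by
  have exists_left_inv : ∀ y, ∃ z, z * (1 + y * x) = 1 := fun y ↦ by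
    obtain ⟨z, hz⟩ := mem_jacobson_iff.mp hx y
    rw [mem_bot, sub_eq_zero] at hz
    exact ⟨z, by rwa [mul_one_add, ← mul_assoc, add_comm]⟩
  obtain ⟨z, hz⟩ : ∃ z, z * (1 + x) = 1 := by simpa using exists_left_inv 1
  -- `z = 1 + (-z) * x` is itself left invertible, and its left inverse must be `1 + x`.
  obtain ⟨w, hw⟩ := exists_left_inv (-z)
  have hz' : 1 - z * x = z := by rw [← hz, mul_one_add, add_sub_cancel_right]
  have hw' : w * z = 1 := by rwa [neg_mul, ← sub_eq_add_neg, hz'] at hw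
  exact isUnit_iff_exists.mpr ⟨z, left_inv_eq_right_inv hw' hz ▸ hw', hz⟩

theorem isLocalHom_mk'_of_le_jacobson_bot {I : TwoSidedIdeal R} (hI : I ≤ jacobson ⊥) :
    IsLocalHom I.ringCon.mk' := by
  refine ⟨fun a ha ↦ ?_⟩
  obtain ⟨b', hab', hba'⟩ := isUnit_iff_exists.mp ha
  obtain ⟨b, rfl⟩ := I.ringCon.mk'_surjective b'
  have isUnit_of_mk'_eq_one : ∀ c, I.ringCon.mk' c = 1 → IsUnit c := fun c hc ↦ by
    have : c - 1 ∈ I := by rw [← rel_iff, ← RingCon.eq]; simpa using hc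
    simpa using isUnit_one_add_of_mem_jacobson_bot (hI this)
  obtain ⟨c, hc⟩ := (isUnit_of_mk'_eq_one (a * b) (by rw [map_mul, hab'])).exists_right_inv
  obtain ⟨d, hd⟩ := (isUnit_of_mk'_eq_one (b * a) (by rw [map_mul, hba'])).exists_left_inv
  exact isUnit_iff_exists_and_exists.mpr
    ⟨⟨b * c, by rw [← mul_assoc, hc]⟩, ⟨d * b, by rw [mul_assoc, hd]⟩⟩

end TwoSidedIdeal

/-- If `I` is a two-sided ideal contained in the Jacobson radical `J(R)` and the
factor ring `R/I` is twin-good, then `R` is twin-good. -/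
theorem twinGood_of_quotient_jacobson (R : Type*) [Ring R] (I : TwoSidedIdeal R)
    (hIJ : I ≤ TwoSidedIdeal.jacobson (⊥ : TwoSidedIdeal R))
    (hQ : ∀ x : I.ringCon.Quotient, ∃ u : I.ringCon.Quotient,
      IsUnit u ∧ IsUnit (x + u) ∧ IsUnit (x - u)) :
    ∀ x : R, ∃ u : R, IsUnit u ∧ IsUnit (x + u) ∧ IsUnit (x - u) := by
  have := TwoSidedIdeal.isLocalHom_mk'_of_le_jacobson_bot hIJ
  intro x
  obtain ⟨u, hu, hxu, hxu'⟩ := hQ (I.ringCon.mk' x)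
  obtain ⟨v, rfl⟩ := I.ringCon.mk'_surjective u
  rw [← map_add] at hxu
  rw [← map_sub] at hxu'
  exact ⟨v, hu.of_map, hxu.of_map, hxu'.of_map⟩
end

section
/- Let R be an elementary divisor ring. Then for each integer n ≥ 3, the matrix ring M_n(R) of n × n matrices over R is twin-good. -/
/-!
After a diagonal reduction it suffices to treat `D = diagonal d`. Multiplying by the cyclic
permutation matrix `P` turns `D` into `N + E`, where `N` is the weighted superdiagonal shift
(nilpotent) and `E` is the single entry `d (n-1)` at `(n-1, 0)` (square zero). For `n ≥ 3` the
entry `N 0 (n-1)` vanishes, so `E N E = 0` and `E N` is nilpotent too. Then `u = (1 + E N) P`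
is a unit with `D + u = (1 + E) (1 + N) P` and `D - u = (1 - E) (1 - N) (-P)`.
-/

open Matrix

def IsTwinGood {A : Type*} [Ring A] (x : A) : Prop :=
  ∃ u : A, IsUnit u ∧ IsUnit (x + u) ∧ IsUnit (x - u)

section Ring

variable {A : Type*} [Ring A]

theorem IsTwinGood.of_mul_mul {p x q : A} (hp : IsUnit p) (hq : IsUnit q)
    (h : IsTwinGood (p * x * q)) : IsTwinGood x := by
  obtain ⟨p, rfl⟩ := hp
  obtain ⟨q, rfl⟩ := hq
  obtain ⟨u, hu, hadd, hsub⟩ := h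
  have hx : x = ↑p⁻¹ * (↑p * x * ↑q) * ↑q⁻¹ := by simp [mul_assoc]
  refine ⟨↑p⁻¹ * u * ↑q⁻¹, by simpa using hu, ?_, ?_⟩
  · rw [hx, ← add_mul, ← mul_add]
    simpa using hadd
  · rw [hx, ← sub_mul, ← mul_sub]
    simpa using hsub

theorem isTwinGood_add_mul {a e p : A} (ha : IsNilpotent a) (he : IsNilpotent e)
    (hea : IsNilpotent (e * a)) (hp : IsUnit p) : IsTwinGood ((a + e) * p) := by
  refine ⟨(1 + e * a) * p, hea.isUnit_one_add.mul hp, ?_, ?_⟩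
  · have h : (a + e) * p + (1 + e * a) * p = (1 + e) * (1 + a) * p := by noncomm_ring
    rw [h]
    exact (he.isUnit_one_add.mul ha.isUnit_one_add).mul hp
  · have h : (a + e) * p - (1 + e * a) * p = (1 - e) * (1 - a) * -p := by noncomm_ring
    rw [h]
    exact (he.isUnit_one_sub.mul ha.isUnit_one_sub).mul hp.neg

end Ring

namespace Matrix

variable {R : Type*}

theorem isNilpotent_of_forall_le_eq_zero [Semiring R] {n : ℕ} {M : Matrix (Fin n) (Fin n) R}
    (hM : ∀ i j, j ≤ i → M i j = 0) : IsNilpotent M := by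
  have hpow : ∀ k (i j : Fin n), (j : ℕ) < i + k → (M ^ k) i j = 0 := by
    intro k
    induction k with
    | zero =>
      intro i j h
      exact one_apply_ne (by rintro rfl; omega)
    | succ k ih =>
      intro i j h
      rw [pow_succ', mul_apply]
      refine Finset.sum_eq_zero fun l _ => ?_
      rcases le_or_gt l i with hl | hl
      · rw [hM i l hl, zero_mul]
      · rw [ih l j (by omega), mul_zero]
  exact ⟨n, ext fun i j => hpow n i j (by omega)⟩

theorem isNilpotent_single_of_ne [Semiring R] {n : Type*} [Fintype n] [DecidableEq n]
    {i j : n} (hij : i ≠ j) (c : R) : IsNilpotent (single i j c) :=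
  ⟨2, by rw [sq]; exact single_mul_single_of_ne (c := c) i j i hij.symm c⟩

theorem isTwinGood_diagonal [Ring R] {n : ℕ} (hn : 3 ≤ n) (d : Fin n → R) :
    IsTwinGood (diagonal d) := by
  obtain ⟨m, rfl⟩ : ∃ m, n = m + 1 := ⟨n - 1, by omega⟩
  set σ := finRotate (m + 1)
  set W : Matrix (Fin (m + 1)) (Fin (m + 1)) R := diagonal d * σ.permMatrix R
  set E : Matrix (Fin (m + 1)) (Fin (m + 1)) R := single (Fin.last m) 0 (d (Fin.last m))
  set N := W - E
  have hW : ∀ i j, W i j = if σ i = j then d i else 0 := by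
    intro i j
    simp [W, PEquiv.toMatrix_apply]
  have hlast : Fin.last m ≠ 0 := by
    rw [Fin.ne_iff_vne, Fin.val_last, Fin.val_zero]
    omega
  have hN : ∀ i j, j ≤ i → N i j = 0 := by
    intro i j hji
    rcases eq_or_ne i (Fin.last m) with rfl | hi
    · simp [N, E, hW, σ, single_apply, eq_comm]
    · have : j < σ i := hji.trans_lt ((lt_finRotate_iff_ne_last i).mpr hi)
      simp [N, E, hW, this.ne', hi.symm]
  have hN0 : N 0 (Fin.last m) = 0 := by
    have : σ 0 ≠ Fin.last m := by
      rw [Fin.ne_iff_vne, coe_finRotate_of_ne_last hlast.symm, Fin.val_zero, Fin.val_last]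
      omega
    simp [N, E, hW, this, hlast]
  have hD : diagonal d = (N + E) * (σ⁻¹).permMatrix R := by
    rw [sub_add_cancel, mul_assoc, ← permMatrix_mul, inv_mul_cancel, permMatrix_one, mul_one]
  rw [hD]
  refine isTwinGood_add_mul (isNilpotent_of_forall_le_eq_zero hN)
    (isNilpotent_single_of_ne hlast _) ⟨2, ?_⟩ ?_
  · rw [sq, ← mul_assoc, single_mul_mul_single, hN0, mul_zero, zero_mul, single_zero, zero_mul]
  · exact (Group.isUnit σ).map (permMatrixHom (R := R))

end Matrix

/-- If `R` is an elementary divisor ring (every square matrix over `R` admits a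
diagonal reduction), then `Mₙ(R)` is twin-good for every `n ≥ 3`. -/
theorem matrix_twinGood_of_elementaryDivisorRing (R : Type*) [Ring R]
    (hEDR : ∀ (m : ℕ) (A : Matrix (Fin m) (Fin m) R),
      ∃ P Q : Matrix (Fin m) (Fin m) R, IsUnit P ∧ IsUnit Q ∧
        ∃ d : Fin m → R, P * A * Q = Matrix.diagonal d)
    (n : ℕ) (hn : 3 ≤ n) :
    ∀ M : Matrix (Fin n) (Fin n) R, ∃ U : Matrix (Fin n) (Fin n) R,
      IsUnit U ∧ IsUnit (M + U) ∧ IsUnit (M - U) := by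
  intro M
  obtain ⟨P, Q, hP, hQ, d, hPMQ⟩ := hEDR n M
  exact IsTwinGood.of_mul_mul hP hQ (hPMQ ▸ isTwinGood_diagonal hn d)
end

section
/- Let R be a ring, let n ≥ 3, and let d_1, …, d_n ∈ R. Define the n × n matrices B⁺ and B⁻ over R by: B⁺ has diagonal entries (B⁺)_{ii} = d_i, subdiagonal entries (B⁺)_{i+1,i} = 1 for 1 ≤ i ≤ n−1, corner entries (B⁺)_{1,n} = 1 and (B⁺)_{n,1} = d_n·d_1, and all other entries 0; B⁻ has diagonal entries (B⁻)_{ii} = d_i, subdiagonal entries (B⁻)_{i+1,i} = −1, corner entries (B⁻)_{1,n} = −1 and (B⁻)_{n,1} = −d_n·d_1, and all other entries 0. Then both B⁺ and B⁻ are invertible matrices in M_n(R). -/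
/-!
Write `B⁺ = P + D + dₙ d₁ Eₙ₁`, where `P` is the permutation matrix of the cyclic shift
`i ↦ i - 1` and `D = diag d`. Moving the `(1,1)` entry of `D` into a column operation gives
`B⁺ = (P + D') (1 + d₁ Eₙ₁)` with `D' = diag (0, d₂, …, dₙ)`. The second factor is `1` plus a
square-zero matrix, and `P + D' = P (1 + P⁻¹ D')` with `P⁻¹ D'` strictly upper triangular, hence
nilpotent. Finally `-B⁻` is `B⁺` built from the entries `-dᵢ`.
-/

open Equiv

namespace Matrix

section Semiring

variable {R : Type*} [Semiring R]

theorem pow_eq_zero_of_strictUpper {n : ℕ} {N : Matrix (Fin n) (Fin n) R}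
    (hN : ∀ i j, j ≤ i → N i j = 0) : N ^ n = 0 := by
  suffices h : ∀ k (i j : Fin n), (j : ℕ) < i + k → (N ^ k) i j = 0 by
    ext i j
    exact h n i j (by omega)
  intro k
  induction k with
  | zero => exact fun i j hij => one_apply_ne (by rintro rfl; omega)
  | succ k ih =>
    intro i j hij
    rw [pow_succ, mul_apply]
    refine Finset.sum_eq_zero fun l _ => ?_
    rcases le_or_gt j l with hjl | hlj
    · rw [hN l j hjl, mul_zero]
    · rw [ih i l (by rw [Fin.lt_def] at hlj; omega), zero_mul]

variable {ι : Type*} [Fintype ι] [DecidableEq ι]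

theorem isUnit_permMatrix (σ : Perm ι) : IsUnit (σ.permMatrix R) := by
  simpa using (Group.isUnit σ⁻¹).map (permMatrixHom (n := ι) (R := R))

theorem permMatrix_mul_single (σ : Perm ι) (i j : ι) (c : R) :
    σ.permMatrix R * single i j c = single (σ.symm i) j c := by
  ext k l
  simp [PEquiv.toMatrix_toPEquiv_mul, single_apply, symm_apply_eq]

theorem diagonal_mul_single (d : ι → R) (i j : ι) (c : R) :
    diagonal d * single i j c = single i j (d i * c) := by
  ext k l
  rw [diagonal_mul]
  by_cases h : k = i
  · subst h
    simp [single_apply]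
  · simp [single_apply_of_row_ne (Ne.symm h)]

end Semiring

variable {R : Type*} [Ring R]

theorem diagonal_update_eq_sub_single {ι : Type*} [DecidableEq ι] (d : ι → R) (i : ι) :
    diagonal (Function.update d i 0) = diagonal d - single i i (d i) := by
  rw [← diagonal_single, diagonal_sub]
  congr 1
  funext j
  by_cases h : j = i
  · subst h
    simp
  · simp [h]

theorem isUnit_permMatrix_add_diagonal {n : ℕ} (σ : Perm (Fin n)) (d : Fin n → R)
    (hd : ∀ j, j ≤ σ j → d j = 0) : IsUnit (σ.permMatrix R + diagonal d) := by
  have hfactor : σ.permMatrix R + diagonal d =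
      σ.permMatrix R * (1 + σ⁻¹.permMatrix R * diagonal d) := by
    rw [mul_add, mul_one, ← mul_assoc, ← permMatrix_mul, inv_mul_cancel, permMatrix_one, one_mul]
  have hN : IsNilpotent (σ⁻¹.permMatrix R * diagonal d) := by
    refine ⟨n, pow_eq_zero_of_strictUpper fun i j hji => ?_⟩
    simp only [mul_diagonal, PEquiv.toMatrix_toPEquiv_apply]
    rcases eq_or_ne (σ⁻¹ i) j with rfl | hne
    · rw [hd _ (by simpa using hji), mul_zero]
    · rw [Pi.single_eq_of_ne' hne, zero_mul]
  rw [hfactor]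
  exact (isUnit_permMatrix σ).mul hN.isUnit_one_add

variable {m : ℕ}

/-- The matrix `B⁺` of the theorem for `n = m + 1`; `(finRotate _).symm` is `i ↦ i - 1`. -/
def cornerMatrix (d : Fin (m + 1) → R) : Matrix (Fin (m + 1)) (Fin (m + 1)) R :=
  Perm.permMatrix R (finRotate (m + 1)).symm + diagonal d +
    single (Fin.last m) 0 (d (Fin.last m) * d 0)

theorem cornerMatrix_eq_mul (hm : m ≠ 0) (d : Fin (m + 1) → R) :
    cornerMatrix d =
      (Perm.permMatrix R (finRotate (m + 1)).symm + diagonal (Function.update d 0 0)) *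
        (1 + single (Fin.last m) 0 (d 0)) := by
  have hlast : Fin.last m ≠ 0 := by simpa [Fin.ext_iff] using hm
  simp only [diagonal_update_eq_sub_single, mul_add, sub_mul, add_mul, mul_one]
  rw [permMatrix_mul_single, symm_symm, finRotate_last, diagonal_mul_single,
    single_mul_single_of_ne _ _ _ _ hlast.symm, cornerMatrix]
  abel

theorem isUnit_cornerMatrix (hm : m ≠ 0) (d : Fin (m + 1) → R) : IsUnit (cornerMatrix d) := by
  have hlast : Fin.last m ≠ 0 := by simpa [Fin.ext_iff] using hm
  rw [cornerMatrix_eq_mul hm]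
  refine (isUnit_permMatrix_add_diagonal _ _ fun j hj => ?_).mul ?_
  · have hj0 : j = 0 := by
      by_contra hj0
      exact (finRotate_symm_lt_iff_ne_zero j).2 hj0 |>.not_ge hj
    simp [hj0]
  · refine IsNilpotent.isUnit_one_add ⟨2, ?_⟩
    rw [sq, single_mul_single_of_ne _ _ _ _ hlast.symm]

/-- For `m = 1` the subdiagonal clause would shadow the corner entry `(m, 0)`. -/
theorem eq_cornerMatrix (hm : 2 ≤ m) (d : Fin (m + 1) → R)
    (B : Matrix (Fin (m + 1)) (Fin (m + 1)) R)
    (hB : ∀ i j : Fin (m + 1), B i j =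
      if i = j then d i
      else if (i : ℕ) = (j : ℕ) + 1 then 1
      else if (i : ℕ) = 0 ∧ (j : ℕ) = m then 1
      else if (i : ℕ) = m ∧ (j : ℕ) = 0 then d i * d j
      else 0) :
    B = cornerMatrix d := by
  ext i j
  simp only [hB, cornerMatrix, add_apply, PEquiv.toMatrix_toPEquiv_apply, diagonal_apply,
    single_apply, Pi.single_apply, eq_symm_apply, Fin.ext_iff, coe_finRotate, Fin.val_last,
    Fin.val_zero]
  by_cases hc : (i : ℕ) = m ∧ (j : ℕ) = 0
  · obtain ⟨rfl, rfl⟩ : i = Fin.last m ∧ j = 0 := ⟨Fin.ext hc.1, Fin.ext hc.2⟩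
    have h0 : m ≠ 0 := by omega
    have h1 : m ≠ 1 := by omega
    simp [h0, h1, h0.symm, h1.symm]
  · split_ifs <;> first | omega | simp

end Matrix

open Matrix

/-- Let `R` be a ring, `n ≥ 3`, and `d : Fin n → R`. The matrices `B⁺` and `B⁻`
with diagonal entries `d i`, subdiagonal entries `1` (resp. `-1`), top-right
corner entry `1` (resp. `-1`) and bottom-left corner entry `dₙ·d₁`
(resp. `-dₙ·d₁`), and all other entries `0`, are both invertible in `Mₙ(R)`. -/
theorem corner_matrices_invertible (R : Type*) [Ring R] (n : ℕ) (hn : 3 ≤ n)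
    (d : Fin n → R) (Bplus Bminus : Matrix (Fin n) (Fin n) R)
    (hBp : ∀ i j : Fin n, Bplus i j =
      if i = j then d i
      else if (i : ℕ) = (j : ℕ) + 1 then 1
      else if (i : ℕ) = 0 ∧ (j : ℕ) = n - 1 then 1
      else if (i : ℕ) = n - 1 ∧ (j : ℕ) = 0 then d i * d j
      else 0)
    (hBm : ∀ i j : Fin n, Bminus i j =
      if i = j then d i
      else if (i : ℕ) = (j : ℕ) + 1 then -1
      else if (i : ℕ) = 0 ∧ (j : ℕ) = n - 1 then -1
      else if (i : ℕ) = n - 1 ∧ (j : ℕ) = 0 then -(d i * d j)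
      else 0) :
    IsUnit Bplus ∧ IsUnit Bminus := by
  obtain ⟨m, rfl⟩ : ∃ m, n = m + 1 := ⟨n - 1, by omega⟩
  simp only [Nat.add_sub_cancel] at hBp hBm
  have hm : 2 ≤ m := by omega
  have hBm' : -Bminus = cornerMatrix (-d) := by
    refine eq_cornerMatrix hm _ _ fun i j => ?_
    rw [Matrix.neg_apply, hBm]
    split_ifs <;> simp
  refine ⟨eq_cornerMatrix hm d Bplus hBp ▸ isUnit_cornerMatrix (by omega) d, ?_⟩
  rw [← neg_neg Bminus, hBm']
  exact (isUnit_cornerMatrix (by omega) (-d)).neg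
end

section
/- Let V be a right vector space over a division ring D, and suppose it is not the case that V is one-dimensional over D with D isomorphic to Z/2Z. Then every linear transformation of V is the sum of two invertible linear transformations. -/
/-!
A block matrix `[[a, b], [c, d]] : P₁ × P₂ → Q₁ × Q₂` whose off-diagonal blocks are sums of two
isomorphisms, `b = τ₁ + τ₂` and `c = σ₁ + σ₂`, is itself one: it is
`[[0, τ₁], [σ₁, d]] + [[a, τ₂], [σ₂, 0]]`. In particular `a × f` is a sum of two isomorphisms as
soon as `P₁ ≃ Q₂` and `P₂ ≃ Q₁`.

After choosing complements `W` of `ker T` and `C` of `range T`, the map `T` becomes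
`id × 0 : W × ker T → W × C`, and splitting `W`, `ker T` and `C` into pieces of suitable dimensions
brings it into such a crossed block-diagonal form. This is impossible only when `T` is invertible
and `V` has odd finite dimension. Then write `V = X × Y × X` with `X` a line: the identity, as a
map `X × (Y × X) → (X × Y) × X`, has off-diagonal blocks `0` and, up to a swap,
`id × 0 : Y × X → Y × X`, which is covered by the first case. In dimension one,
`1 = c + (1 - c)` needs a scalar `c ∉ {0, 1}`.
-/

namespace LinearMap

variable {R : Type*} [Ring R] {M N M' N' P₁ P₂ Q₁ Q₂ : Type*}
  [AddCommGroup M] [Module R M] [AddCommGroup N] [Module R N]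
  [AddCommGroup M'] [Module R M'] [AddCommGroup N'] [Module R N']
  [AddCommGroup P₁] [Module R P₁] [AddCommGroup P₂] [Module R P₂]
  [AddCommGroup Q₁] [Module R Q₁] [AddCommGroup Q₂] [Module R Q₂]

def IsSumOfTwoEquivs (F : M →ₗ[R] N) : Prop :=
  ∃ α β : M ≃ₗ[R] N, F = α.toLinearMap + β.toLinearMap

theorem IsSumOfTwoEquivs.of_comp_eq {F : M →ₗ[R] N} {F' : M' →ₗ[R] N'} (e₁ : M ≃ₗ[R] M')
    (e₂ : N ≃ₗ[R] N') (h : e₂.toLinearMap ∘ₗ F = F' ∘ₗ e₁.toLinearMap)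
    (hF' : IsSumOfTwoEquivs F') : IsSumOfTwoEquivs F := by
  obtain ⟨α, β, rfl⟩ := hF'
  refine ⟨e₁.trans (α.trans e₂.symm), e₁.trans (β.trans e₂.symm), LinearMap.ext fun x => ?_⟩
  have hx := congr($h x)
  simp only [coe_comp, LinearEquiv.coe_coe, Function.comp_apply, add_apply] at hx
  simp [← map_add, ← hx]

theorem isSumOfTwoEquivs_zero (e : M ≃ₗ[R] N) : IsSumOfTwoEquivs (0 : M →ₗ[R] N) :=
  ⟨e, e.trans (LinearEquiv.neg R), by ext; simp⟩

theorem IsSumOfTwoEquivs.coprod_prod {a : P₁ →ₗ[R] Q₁} {b : P₂ →ₗ[R] Q₁} {c : P₁ →ₗ[R] Q₂}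
    {d : P₂ →ₗ[R] Q₂} (hb : IsSumOfTwoEquivs b) (hc : IsSumOfTwoEquivs c) :
    IsSumOfTwoEquivs ((a.coprod b).prod (c.coprod d)) := by
  obtain ⟨τ₁, τ₂, rfl⟩ := hb
  obtain ⟨σ₁, σ₂, rfl⟩ := hc
  refine ⟨(LinearEquiv.prodComm R P₁ P₂).trans (τ₁.skewProd σ₁ d),
    (σ₂.skewProd τ₂ a).trans (LinearEquiv.prodComm R Q₂ Q₁), ?_⟩
  refine LinearMap.ext fun p => Prod.ext ?_ ?_ <;>
    simp only [prod_apply, Function.prod_apply, coprod_apply, add_apply, LinearEquiv.coe_coe,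
      LinearEquiv.trans_apply, LinearEquiv.prodComm_apply, LinearEquiv.skewProd_apply,
      Prod.fst_swap, Prod.snd_swap, Prod.swap_prod_mk, Prod.mk_add_mk] <;>
    abel

theorem isSumOfTwoEquivs_prodMap (a : P₁ →ₗ[R] Q₁) (f : P₂ →ₗ[R] Q₂) (σ : P₁ ≃ₗ[R] Q₂)
    (τ : P₂ ≃ₗ[R] Q₁) : IsSumOfTwoEquivs (a.prodMap f) := by
  convert (isSumOfTwoEquivs_zero τ).coprod_prod (a := a) (d := f) (isSumOfTwoEquivs_zero σ)
    using 1
  refine LinearMap.ext fun p => Prod.ext ?_ ?_ <;> simp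

theorem isSumOfTwoEquivs_prodMap_id_zero_of_equiv {W K C W₁ W₂ K₁ K₂ C₁ C₂ : Type*}
    [AddCommGroup W] [Module R W] [AddCommGroup K] [Module R K] [AddCommGroup C] [Module R C]
    [AddCommGroup W₁] [Module R W₁] [AddCommGroup W₂] [Module R W₂]
    [AddCommGroup K₁] [Module R K₁] [AddCommGroup K₂] [Module R K₂]
    [AddCommGroup C₁] [Module R C₁] [AddCommGroup C₂] [Module R C₂]
    (eW : W ≃ₗ[R] W₁ × W₂) (eK : K ≃ₗ[R] K₁ × K₂) (eC : C ≃ₗ[R] C₁ × C₂)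
    (σ : (W₁ × K₁) ≃ₗ[R] W₂ × C₂) (τ : (W₂ × K₂) ≃ₗ[R] W₁ × C₁) :
    IsSumOfTwoEquivs ((id : W →ₗ[R] W).prodMap (0 : K →ₗ[R] C)) := by
  refine IsSumOfTwoEquivs.of_comp_eq
    ((eW.prodCongr eK).trans (LinearEquiv.prodProdProdComm R W₁ W₂ K₁ K₂))
    ((eW.prodCongr eC).trans (LinearEquiv.prodProdProdComm R W₁ W₂ C₁ C₂)) ?_
    (isSumOfTwoEquivs_prodMap (id.prodMap 0) (id.prodMap 0) σ τ)
  refine LinearMap.ext fun p => ?_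
  simp

theorem isSumOfTwoEquivs_id_prod_prod {X Y : Type*} [AddCommGroup X] [Module R X]
    [AddCommGroup Y] [Module R Y]
    (h : IsSumOfTwoEquivs ((id : Y →ₗ[R] Y).prodMap (0 : X →ₗ[R] X))) :
    IsSumOfTwoEquivs (id : X × Y × X →ₗ[R] X × Y × X) := by
  have hb : IsSumOfTwoEquivs (inr R X Y ∘ₗ fst R Y X) :=
    h.of_comp_eq (.refl R _) (LinearEquiv.prodComm R X Y) (LinearMap.ext fun p => by simp)
  refine (hb.coprod_prod (a := inl R X Y) (d := snd R Y X) (isSumOfTwoEquivs_zero (.refl R X))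
    ).of_comp_eq (.refl R _) (LinearEquiv.prodAssoc R X Y X).symm (LinearMap.ext fun p => ?_)
  simp only [comp_id, LinearEquiv.coe_coe, LinearEquiv.refl_toLinearMap, prod_apply,
    Function.prod_apply, coprod_apply, coe_inl, coe_comp, coe_inr, coe_fst, Function.comp_apply,
    Prod.mk_add_mk, add_zero, zero_add, zero_apply, snd_apply]
  rfl

theorem isSumOfTwoEquivs_id_self {c : R} (hc : IsUnit c) (hc' : IsUnit (1 - c)) :
    IsSumOfTwoEquivs (id : R →ₗ[R] R) := by
  obtain ⟨u, rfl⟩ := hc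
  obtain ⟨v, hv⟩ := hc'
  refine ⟨.ofBijective (mulRight R (u : R)) (Units.mulRight u).bijective,
    .ofBijective (mulRight R (v : R)) (Units.mulRight v).bijective, LinearMap.ext fun x => ?_⟩
  change x = x * u + x * v
  rw [hv, mul_sub, mul_one, add_sub_cancel]

theorem IsSumOfTwoEquivs.exists_isUnit_add {T : Module.End R M} (hT : IsSumOfTwoEquivs T) :
    ∃ S₁ S₂ : Module.End R M, IsUnit S₁ ∧ IsUnit S₂ ∧ T = S₁ + S₂ := by
  obtain ⟨α, β, rfl⟩ := hT
  exact ⟨α, β, (Module.End.isUnit_iff _).2 α.bijective, (Module.End.isUnit_iff _).2 β.bijective,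
    rfl⟩

end LinearMap

universe u

open Cardinal

namespace Cardinal

theorem aleph0_le_and_le_of_add_eq_add_of_ne {w k c : Cardinal} (h : w + k = w + c)
    (hkc : k ≠ c) : ℵ₀ ≤ w ∧ k ≤ w ∧ c ≤ w := by
  have hw : ℵ₀ ≤ w := by
    by_contra! hw
    rw [add_comm w k, add_comm w c, add_right_inj_of_lt_aleph0 hw] at h
    exact hkc h
  have le_of_add_eq_add {k c : Cardinal} (h : w + k = w + c) (hkc : k ≠ c) : k ≤ w := by
    by_contra! hk
    rw [add_eq_right (hw.trans hk.le) hk.le] at h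
    rcases le_or_gt c w with hc | hc
    · rw [add_eq_left hw hc] at h
      exact hk.ne h.symm
    · exact hkc (h.trans (add_eq_right (hw.trans hc.le) hc.le))
  exact ⟨hw, le_of_add_eq_add h hkc, le_of_add_eq_add h.symm (Ne.symm hkc)⟩

theorem exists_cross_split_of_add_eq_add {w k c : Cardinal} (h : w + k = w + c)
    (hodd : ¬(k = 0 ∧ c = 0 ∧ ∃ m : ℕ, w = 2 * m + 1)) :
    ∃ w₁ w₂ k₁ k₂ c₁ c₂ : Cardinal, w = w₁ + w₂ ∧ k = k₁ + k₂ ∧ c = c₁ + c₂ ∧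
      w₁ + k₁ = w₂ + c₂ ∧ w₂ + k₂ = w₁ + c₁ := by
  by_cases hkc : k = c
  · subst hkc
    -- halve `w`, up to a line `l` taken from `k` when `w` is odd
    obtain ⟨m, l, k', hw, hk⟩ : ∃ m l k' : Cardinal, w = m + l + m ∧ k = l + k' := by
      rcases lt_or_ge w ℵ₀ with hw | hw
      · obtain ⟨n, rfl⟩ := lt_aleph0.1 hw
        rcases n.even_or_odd' with ⟨m, rfl | rfl⟩
        · exact ⟨m, 0, k, by push_cast; ring, by simp⟩
        · obtain ⟨k', rfl⟩ := exists_add_of_le <|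
            Cardinal.one_le_iff_ne_zero.2 fun hk => hodd ⟨hk, hk, m, by push_cast; ring⟩
          exact ⟨m, 1, k', by push_cast; ring, rfl⟩
      · exact ⟨w, 0, k, by rw [add_zero, add_eq_self hw], by simp⟩
    exact ⟨m + l, m, 0, k, k', l, hw, by simp, by rw [hk, add_comm], by simp,
      by rw [hk]; ring⟩
  · obtain ⟨hw, hk, hc⟩ := aleph0_le_and_le_of_add_eq_add_of_ne h hkc
    exact ⟨w, w, k, 0, c, 0, (add_eq_self hw).symm, by simp, by simp,
      by simp [add_eq_left hw hk], by simp [add_eq_left hw hc]⟩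

end Cardinal

section Finsupp

variable (R : Type*) [Ring R]

theorem nonempty_finsupp_equiv_prod {ι α β : Type u} (h : #ι = #α + #β) :
    Nonempty ((ι →₀ R) ≃ₗ[R] (α →₀ R) × (β →₀ R)) := by
  obtain ⟨e⟩ := Cardinal.eq.1 (h.trans (by simp) : #ι = #(α ⊕ β))
  exact ⟨(Finsupp.domLCongr e).trans (Finsupp.sumFinsuppLEquivProdFinsupp R)⟩

theorem nonempty_finsupp_prod_equiv {α β γ δ : Type u} (h : #α + #β = #γ + #δ) :
    Nonempty (((α →₀ R) × (β →₀ R)) ≃ₗ[R] (γ →₀ R) × (δ →₀ R)) := by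
  obtain ⟨e⟩ := nonempty_finsupp_equiv_prod R (ι := α ⊕ β) (by simpa using h)
  exact ⟨(Finsupp.sumFinsuppLEquivProdFinsupp R).symm.trans e⟩

variable {R}

open LinearMap

theorem isSumOfTwoEquivs_finsupp_prodMap_id_zero_of_not_odd {J L M : Type u}
    (h : #J + #L = #J + #M) (hodd : ¬(#L = 0 ∧ #M = 0 ∧ ∃ m : ℕ, #J = 2 * m + 1)) :
    IsSumOfTwoEquivs ((id : (J →₀ R) →ₗ[R] J →₀ R).prodMap (0 : (L →₀ R) →ₗ[R] M →₀ R)) := by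
  obtain ⟨w₁, w₂, k₁, k₂, c₁, c₂, hw, hk, hc, h₁, h₂⟩ :=
    Cardinal.exists_cross_split_of_add_eq_add h hodd
  obtain ⟨eW⟩ := nonempty_finsupp_equiv_prod R (α := w₁.out) (β := w₂.out) (by simpa using hw)
  obtain ⟨eK⟩ := nonempty_finsupp_equiv_prod R (α := k₁.out) (β := k₂.out) (by simpa using hk)
  obtain ⟨eC⟩ := nonempty_finsupp_equiv_prod R (α := c₁.out) (β := c₂.out) (by simpa using hc)
  obtain ⟨σ⟩ := nonempty_finsupp_prod_equiv R (α := w₁.out) (β := k₁.out) (γ := w₂.out)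
    (δ := c₂.out) (by simpa using h₁)
  obtain ⟨τ⟩ := nonempty_finsupp_prod_equiv R (α := w₂.out) (β := k₂.out) (γ := w₁.out)
    (δ := c₁.out) (by simpa using h₂)
  exact isSumOfTwoEquivs_prodMap_id_zero_of_equiv eW eK eC σ τ

theorem isSumOfTwoEquivs_finsupp_id_of_odd {J : Type u} {m : ℕ} (hJ : #J = 2 * m + 1)
    (hc : m = 0 → ∃ c : R, IsUnit c ∧ IsUnit (1 - c)) :
    IsSumOfTwoEquivs (id : (J →₀ R) →ₗ[R] J →₀ R) := by
  rcases m with _ | m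
  · obtain ⟨c, hc, hc'⟩ := hc rfl
    obtain ⟨e⟩ := Cardinal.eq.1 (hJ.trans (by simp) : #J = #PUnit.{u + 1})
    let e' := (Finsupp.domLCongr e).trans (Finsupp.uniqueLinearEquiv R R PUnit.unit)
    exact (isSumOfTwoEquivs_id_self hc hc').of_comp_eq e' e' ((comp_id _).trans (id_comp _).symm)
  · obtain ⟨e⟩ := nonempty_finsupp_equiv_prod R (ι := J) (α := PUnit.{u + 1})
      (β := ULift.{u} (Fin (2 * m + 1)) ⊕ PUnit.{u + 1}) (by simp [hJ]; ring)
    let e' := e.trans ((LinearEquiv.refl R _).prodCongr (Finsupp.sumFinsuppLEquivProdFinsupp R))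
    have h := isSumOfTwoEquivs_finsupp_prodMap_id_zero_of_not_odd (R := R)
      (J := ULift.{u} (Fin (2 * m + 1))) (L := PUnit.{u + 1}) (M := PUnit.{u + 1}) rfl (by simp)
    exact (isSumOfTwoEquivs_id_prod_prod h).of_comp_eq e' e' ((comp_id _).trans (id_comp _).symm)

theorem isSumOfTwoEquivs_finsupp_prodMap_id_zero {J L M : Type u} (h : #J + #L = #J + #M)
    (hc : #L = 0 → #J = 1 → ∃ c : R, IsUnit c ∧ IsUnit (1 - c)) :
    IsSumOfTwoEquivs ((id : (J →₀ R) →ₗ[R] J →₀ R).prodMap (0 : (L →₀ R) →ₗ[R] M →₀ R)) := by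
  by_cases hodd : #L = 0 ∧ #M = 0 ∧ ∃ m : ℕ, #J = 2 * m + 1
  · obtain ⟨hL, hM, m, hJ⟩ := hodd
    have := mk_eq_zero_iff.1 hL
    have := mk_eq_zero_iff.1 hM
    exact (isSumOfTwoEquivs_finsupp_id_of_odd hJ fun hm => hc hL (by simp [hJ, hm])).of_comp_eq
      (LinearEquiv.prodUnique) (LinearEquiv.prodUnique) (LinearMap.ext fun p => by simp)
  · exact isSumOfTwoEquivs_finsupp_prodMap_id_zero_of_not_odd h hodd

end Finsupp

section DivisionRing

variable {K : Type*} {V : Type u} [DivisionRing K] [AddCommGroup V] [Module K V]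

open LinearMap Submodule

theorem exists_equiv_comp_eq_prodMap_id_zero (T : Module.End K V) :
    ∃ (J L M : Type u) (φ : V ≃ₗ[K] (J →₀ K) × (L →₀ K)) (ψ : V ≃ₗ[K] (J →₀ K) × (M →₀ K)),
      ψ.toLinearMap ∘ₗ T = (id.prodMap 0) ∘ₗ φ.toLinearMap := by
  obtain ⟨W, hW⟩ := (ker T).exists_isCompl
  obtain ⟨C, hC⟩ := (range T).exists_isCompl
  let t : W ≃ₗ[K] range T := (quotientEquivOfIsCompl _ _ hW).symm.trans T.quotKerEquivRange
  have ht (w : W) : (t w : V) = T w := rfl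
  let bW := Module.Basis.ofVectorSpace K W
  refine ⟨_, _, _, (prodEquivOfIsCompl W (ker T) hW.symm).symm.trans
    (bW.repr.prodCongr (Module.Basis.ofVectorSpace K (ker T)).repr),
    (prodEquivOfIsCompl (range T) C hC).symm.trans
    ((t.symm.trans bW.repr).prodCongr (Module.Basis.ofVectorSpace K C).repr), ?_⟩
  refine LinearMap.ext fun v => ?_
  obtain ⟨⟨w, k⟩, rfl⟩ := (prodEquivOfIsCompl W (ker T) hW.symm).surjective v
  simp [← ht, projectionOnto_apply_left]

theorem mk_add_mk_eq_rank {J L : Type u} (φ : V ≃ₗ[K] (J →₀ K) × (L →₀ K)) :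
    #J + #L = Module.rank K V := by
  rw [← (Finsupp.basisSingleOne.map
    ((Finsupp.sumFinsuppLEquivProdFinsupp K).trans φ.symm)).mk_eq_rank'', mk_sum, lift_id, lift_id]

end DivisionRing

theorem exists_ne_zero_ne_one_of_not_nonempty_ringEquiv {D : Type*} [Ring D] [Nontrivial D]
    (h : ¬Nonempty (D ≃+* ZMod 2)) : ∃ c : D, c ≠ 0 ∧ c ≠ 1 := by
  classical
  by_contra! hD
  let _ : Fintype D := ⟨{0, 1}, fun c => by by_cases hc : c = 0 <;> simp [hc, hD]⟩
  have hcard : Fintype.card D = 2 := Finset.card_pair zero_ne_one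
  exact h ⟨(ZMod.ringEquivOfPrime D Nat.prime_two hcard).symm⟩

/-- Let `V` be a right vector space over a division ring `D` such that it is not
the case that `V` is one-dimensional with `D ≅ ℤ/2ℤ`. Then every linear
transformation of `V` is the sum of two invertible linear transformations. -/
theorem linearMap_sum_of_two_units (D : Type*) [DivisionRing D] (V : Type*)
    [AddCommGroup V] [Module Dᵐᵒᵖ V]
    (h : ¬(Module.rank Dᵐᵒᵖ V = 1 ∧ Nonempty (D ≃+* ZMod 2))) :
    ∀ T : Module.End Dᵐᵒᵖ V, ∃ S₁ S₂ : Module.End Dᵐᵒᵖ V,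
      IsUnit S₁ ∧ IsUnit S₂ ∧ T = S₁ + S₂ := by
  intro T
  obtain ⟨J, L, M, φ, ψ, hT⟩ := exists_equiv_comp_eq_prodMap_id_zero T
  have hφ := mk_add_mk_eq_rank φ
  refine (LinearMap.IsSumOfTwoEquivs.of_comp_eq φ ψ hT ?_).exists_isUnit_add
  refine isSumOfTwoEquivs_finsupp_prodMap_id_zero (hφ.trans (mk_add_mk_eq_rank ψ).symm)
    fun hL hJ => ?_
  obtain ⟨c, hc₀, hc₁⟩ := exists_ne_zero_ne_one_of_not_nonempty_ringEquiv fun hD =>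
    h ⟨by rw [← hφ, hL, hJ, add_zero], hD⟩
  exact ⟨MulOpposite.op c, ((MulOpposite.op_ne_zero_iff c).2 hc₀).isUnit,
    (sub_ne_zero.2 (MulOpposite.op_injective.ne hc₁).symm).isUnit⟩
end
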